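/- Let S be a finite set of points in a real normed vector space and let r ≥ 0. For p, q ∈ S, the points p and q lie in the same path component of the union ⋃_{x ∈ S} closedBall(x, r) of closed balls of radius r centered at the points of S if and only if p and q lie in the same connected component of the Vietoris–Rips graph G_{2r}(S), i.e. the simple graph on S joining distinct points at distance at most 2r. -/

import Mathlib

/-!
Write `U` for the union of the balls. Two balls of radius `r` meet exactly when their centres
are at distance at most `2r`, and then the centres are joined inside the two balls through the
midpoint; chaining along a walk shows that points in the same component of the Rips graph are
joined in `U`. Conversely, the union of the balls whose centres are reachable from `p` and the
union of the remaining balls are closed (finite unions of closed sets), cover `U`, and cannot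
meet, since a common point would put a reachable and an unreachable centre within `2r` of each
other. A path from `p` to `q` in `U` is connected, so it cannot leave the first union.
-/

/-- The Vietoris–Rips graph at scale `s` on a finite set `S` of points of a metric
space: distinct points `p, q ∈ S` are adjacent exactly when `dist p q ≤ s`. -/
def ripsGraph {X : Type*} [MetricSpace X] (S : Finset X) (r : ℝ) :
    SimpleGraph {x // x ∈ S} where
  Adj p q := p ≠ q ∧ dist (p : X) (q : X) ≤ r
  symm := by
    constructor
    intro p q ⟨hpq, hd⟩
    exact ⟨hpq.symm, by rwa [dist_comm]⟩
  loopless := by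
    constructor
    intro p ⟨hp, _⟩
    exact hp rfl

open Metric Set

namespace SimpleGraph

variable {ι X : Type*} [TopologicalSpace X] (G : SimpleGraph ι)

theorem reachable_of_isPreconnected_subset_iUnion [Finite ι] {K : ι → Set X}
    (hK : ∀ i, IsClosed (K i)) (hG : ∀ i j, (K i ∩ K j).Nonempty → G.Reachable i j)
    {s : Set X} (hs : IsPreconnected s) (hsK : s ⊆ ⋃ i, K i) {i j : ι}
    (hi : (s ∩ K i).Nonempty) (hj : (s ∩ K j).Nonempty) : G.Reachable i j := by
  by_contra hij
  set R : Set ι := {k | G.Reachable i k}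
  have hcover : s ⊆ (⋃ k ∈ R, K k) ∪ ⋃ k ∈ Rᶜ, K k := by
    rw [← biUnion_union, union_compl_self, biUnion_univ]
    exact hsK
  obtain ⟨x, hxs, hx⟩ := hi
  obtain ⟨y, hys, hy⟩ := hj
  obtain ⟨z, -, hzR, hzRc⟩ := isPreconnected_closed_iff.1 hs _ _
    (R.toFinite.isClosed_biUnion fun k _ => hK k) (Rᶜ.toFinite.isClosed_biUnion fun k _ => hK k)
    hcover ⟨x, hxs, mem_biUnion (Reachable.refl i) hx⟩ ⟨y, hys, mem_biUnion hij hy⟩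
  simp only [mem_iUnion] at hzR hzRc
  obtain ⟨a, ha, hza⟩ := hzR
  obtain ⟨b, hb, hzb⟩ := hzRc
  exact hb (ha.trans (hG a b ⟨z, hza, hzb⟩))

theorem joinedIn_of_reachable {F : Set X} {f : ι → X} (hf : ∀ i, f i ∈ F)
    (hadj : ∀ i j, G.Adj i j → JoinedIn F (f i) (f j)) {i j : ι} (h : G.Reachable i j) :
    JoinedIn F (f i) (f j) := by
  obtain ⟨w⟩ := h
  induction w with
  | nil => exact JoinedIn.refl (hf _)
  | cons hstep _ ih => exact (hadj _ _ hstep).trans ih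

end SimpleGraph

theorem joinedIn_closedBall_union_closedBall {E : Type*} [NormedAddCommGroup E]
    [NormedSpace ℝ E] {x y : E} {r : ℝ} (h : dist x y ≤ 2 * r) :
    JoinedIn (closedBall x r ∪ closedBall y r) x y := by
  have hr : 0 ≤ r := by linarith [dist_nonneg (x := x) (y := y)]
  have hmx : midpoint ℝ x y ∈ closedBall x r := by
    rw [mem_closedBall, dist_midpoint_left, Real.norm_ofNat]
    linarith
  have hmy : midpoint ℝ x y ∈ closedBall y r := by
    rw [mem_closedBall, dist_midpoint_right, Real.norm_ofNat]
    linarith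
  have hxm := (convex_closedBall x r).isPathConnected ⟨x, mem_closedBall_self hr⟩
    |>.joinedIn x (mem_closedBall_self hr) _ hmx
  have hmy := (convex_closedBall y r).isPathConnected ⟨y, mem_closedBall_self hr⟩
    |>.joinedIn _ hmy y (mem_closedBall_self hr)
  exact (hxm.mono subset_union_left).trans (hmy.mono subset_union_right)

theorem ripsGraph_reachable_of_dist_le {X : Type*} [MetricSpace X] {S : Finset X} {s : ℝ}
    {p q : {x // x ∈ S}} (h : dist (p : X) q ≤ s) : (ripsGraph S s).Reachable p q := by
  rcases eq_or_ne p q with rfl | hpq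
  · rfl
  · exact SimpleGraph.Adj.reachable ⟨hpq, h⟩

/-- For a finite set `S` in a real normed vector space and `r ≥ 0`, two points
`p, q ∈ S` lie in the same path component of the union of the closed balls of
radius `r` centered at the points of `S` if and only if they lie in the same
connected component of the Vietoris–Rips graph at scale `2r`. -/
theorem joinedIn_ball_union_iff_ripsGraph_reachable
    {E : Type*} [NormedAddCommGroup E] [NormedSpace ℝ E]
    (S : Finset E) (r : ℝ) (hr : 0 ≤ r) (p q : {x // x ∈ S}) :
    JoinedIn (⋃ x ∈ S, Metric.closedBall x r) (p : E) (q : E) ↔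
      (ripsGraph S (2 * r)).Reachable p q := by
  rw [← iUnion_subtype (fun x => x ∈ S) fun i => closedBall (i : E) r]
  have hball : ∀ i : {x // x ∈ S},
      closedBall (i : E) r ⊆ ⋃ j : {x // x ∈ S}, closedBall (j : E) r :=
    subset_iUnion (fun j : {x // x ∈ S} => closedBall (j : E) r)
  have hcentre : ∀ i : {x // x ∈ S}, (i : E) ∈ closedBall (i : E) r := fun _ =>
    mem_closedBall_self hr
  constructor
  · intro h
    refine (ripsGraph S (2 * r)).reachable_of_isPreconnected_subset_iUnion
      (fun _ => isClosed_closedBall) (fun i j hij => ripsGraph_reachable_of_dist_le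
        ((dist_le_add_of_nonempty_closedBall_inter_closedBall hij).trans_eq (two_mul r).symm))
      (isPathConnected_pathComponentIn h.source_mem).isConnected.isPreconnected
      pathComponentIn_subset ⟨p, mem_pathComponentIn_self h.source_mem, hcentre p⟩
      ⟨q, h, hcentre q⟩
  · exact (ripsGraph S (2 * r)).joinedIn_of_reachable (fun i => hball i (hcentre i))
      fun i j hij => (joinedIn_closedBall_union_closedBall hij.2).mono
        (union_subset (hball i) (hball j))
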